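/- Equivalence of Krivine machine and small-step weak-head semantics: for lambda terms v and v', v weak-head reduces (in many steps) to a normal form v' if and only if ⟨v | tp⟩ reduces in the Krivine machine to a stuck command c whose readback is v', where readback applies ⟨v | v'·E⟩ ⇝ ⟨v v' | E⟩ and ⟨v | tp⟩ ⇝ v. -/
import Mathlib


/-- Untyped lambda terms with de Bruijn indices. -/
inductive Tm : Type
  | var : Nat → Tm
  | app : Tm → Tm → Tm
  | lam : Tm → Tm
deriving DecidableEq

/-- Shift free indices ≥ d up by one. -/
def lift (d : Nat) : Tm → Tm
  | .var n => if n < d then .var n else .var (n + 1)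
  | .app a b => .app (lift d a) (lift d b)
  | .lam a => .lam (lift (d + 1) a)

/-- Capture-avoiding substitution of `u` for index `k`. -/
def subst (u : Tm) (k : Nat) : Tm → Tm
  | .var n => if n = k then u else if k < n then .var (n - 1) else .var n
  | .app a b => .app (subst u k a) (subst u k b)
  | .lam a => .lam (subst (lift 0 u) (k + 1) a)

/-- Small-step weak-head (call-by-name) reduction: E[(λx.v)v'] ↦ E[v[v'/x]], E ::= □ | E v. -/
inductive Wh : Tm → Tm → Prop
  | beta (a b : Tm) : Wh (.app (.lam a) b) (subst b 0 a)
  | appL {a a' : Tm} (b : Tm) : Wh a a' → Wh (.app a b) (.app a' b)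

/-- Neutral terms N ::= x | N v. -/
inductive Neutral : Tm → Prop
  | var (n : Nat) : Neutral (.var n)
  | app {a : Tm} (b : Tm) : Neutral a → Neutral (.app a b)

/-- Weak-head normal forms: WHNF ::= N | λx.v. -/
inductive Whnf : Tm → Prop
  | neutral {a : Tm} : Neutral a → Whnf a
  | lam (a : Tm) : Whnf (.lam a)

/-- Head normal forms: HNF ::= N | λx.HNF. -/
inductive Hnf : Tm → Prop
  | neutral {a : Tm} : Neutral a → Hnf a
  | lam {a : Tm} : Hnf a → Hnf (.lam a)

/-- Small-step head reduction: S[(λx.v)v'] ↦ S[v[v'/x]], S ::= E | λx.S, E ::= □ | E v. -/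
inductive Hd : Tm → Tm → Prop
  | wh {a a' : Tm} : Wh a a' → Hd a a'
  | lam {a a' : Tm} : Hd a a' → Hd (.lam a) (.lam a')

/-- Full beta reduction (contraction in any context). -/
inductive Beta : Tm → Tm → Prop
  | beta (a b : Tm) : Beta (.app (.lam a) b) (subst b 0 a)
  | appL {a a' : Tm} (b : Tm) : Beta a a' → Beta (.app a b) (.app a' b)
  | appR {b b' : Tm} (a : Tm) : Beta b b' → Beta (.app a b) (.app a b')
  | lam {a a' : Tm} : Beta a a' → Beta (.lam a) (.lam a')

/-- Big-step weak-head evaluation. -/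
inductive BigWh : Tm → Tm → Prop
  | var (n : Nat) : BigWh (.var n) (.var n)
  | lam (a : Tm) : BigWh (.lam a) (.lam a)
  | beta {a a' b v : Tm} : BigWh a (.lam a') → BigWh (subst b 0 a') v → BigWh (.app a b) v
  | neu {a a' : Tm} (b : Tm) : BigWh a a' → (∀ t, a' ≠ .lam t) → BigWh (.app a b) (.app a' b)

/-- Big-step head evaluation, derived from weak-head evaluation. -/
inductive BigH : Tm → Tm → Prop
  | lam {v a a' : Tm} : BigWh v (.lam a) → BigH a a' → BigH v (.lam a')
  | notlam {v v' : Tm} : BigWh v v' → (∀ t, v' ≠ .lam t) → BigH v v'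

/-- Sestoft's big-step semantics for head reduction. -/
inductive Sf : Tm → Tm → Prop
  | var (n : Nat) : Sf (.var n) (.var n)
  | lam {a a' : Tm} : Sf a a' → Sf (.lam a) (.lam a')
  | neu {a a' : Tm} (b : Tm) : BigWh a a' → (∀ t, a' ≠ .lam t) → Sf (.app a b) (.app a' b)
  | beta {a a' b v : Tm} : BigWh a (.lam a') → Sf (subst b 0 a') v → Sf (.app a b) v

/-- Krivine machine: co-terms are lists of terms ([] = tp, (· :: ·) = call stack push). -/
abbrev KCmd := Tm × List Tm

/-- Krivine machine steps. -/
inductive KStep : KCmd → KCmd → Prop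
  | push (a b : Tm) (E : List Tm) : KStep (.app a b, E) (a, b :: E)
  | grab (a b : Tm) (E : List Tm) : KStep (.lam a, b :: E) (subst b 0 a, E)

/-- Readback/plugging of a Krivine command: plug⟨v | v'·E⟩ = plug⟨v v' | E⟩, plug⟨v | tp⟩ = v. -/
def plug : Tm → List Tm → Tm
  | v, [] => v
  | v, b :: E => plug (.app v b) E

/-- n-fold lambda abstraction: nLam n v = λ…λ.v with n lambdas. -/
def nLam : Nat → Tm → Tm
  | 0, v => v
  | n + 1, v => .lam (nLam n v)

/-- Co-terms of the head reduction abstract machine: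
`stuck n` is n-fold Abs applied to tp, `cons` pushes an argument. -/
inductive HCo : Type
  | stuck : Nat → HCo
  | cons : Tm → HCo → HCo

abbrev HCmd := Tm × HCo

/-- Head reduction abstract machine steps. -/
inductive HStep : HCmd → HCmd → Prop
  | push (a b : Tm) (E : HCo) : HStep (.app a b, E) (a, .cons b E)
  | grab (a b : Tm) (E : HCo) : HStep (.lam a, .cons b E) (subst b 0 a, E)
  | under (a : Tm) (n : Nat) : HStep (.lam a, .stuck n) (a, .stuck (n + 1))

/-- Readback of the head machine: ⟨v | v'·E⟩ ⇝ ⟨v v' | E⟩, ⟨v | Abs S⟩ ⇝ ⟨λ.v | S⟩, ⟨v | tp⟩ ⇝ v. -/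
def hread : Tm → HCo → Tm
  | v, .stuck n => nLam n v
  | v, .cons b E => hread (.app v b) E

/-- One readback step on head-machine commands. -/
inductive RStep : HCmd → HCmd → Prop
  | cons (v b : Tm) (E : HCo) : RStep (v, .cons b E) (.app v b, E)
  | abs (v : Tm) (n : Nat) : RStep (v, .stuck (n + 1)) (.lam v, .stuck n)

/-- Chains of exactly n readback steps. -/
inductive RStepN : Nat → HCmd → HCmd → Prop
  | refl (c : HCmd) : RStepN 0 c c
  | step {n : Nat} {c c' c'' : HCmd} : RStep c c' → RStepN n c' c'' → RStepN (n + 1) c c''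

/-- Length of a head-machine co-term: constructors above tp. -/
def colen : HCo → Nat
  | .stuck n => n
  | .cons _ E => colen E + 1

/-- All free indices are below k. -/
def ClosedUnder : Nat → Tm → Prop
  | k, .var n => n < k
  | k, .app a b => ClosedUnder k a ∧ ClosedUnder k b
  | k, .lam a => ClosedUnder (k + 1) a

/-- Eta-expansion relation: t is the eta-expansion of f. -/
def EtaExp (t f : Tm) : Prop := t = .lam (.app (lift 0 f) (.var 0))

lemma wh_plug {a a' : Tm} (h : Wh a a') : ∀ E : List Tm, Wh (plug a E) (plug a' E) := by
  intro E
  induction E generalizing a a' with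
  | nil => exact h
  | cons b E ih => exact ih (Wh.appL b h)

lemma neutral_plug {t : Tm} (h : Neutral t) : ∀ E : List Tm, Neutral (plug t E)
  | [] => h
  | b :: E => neutral_plug (Neutral.app b h) E

lemma neutral_no_wh {t u : Tm} (h : Wh t u) : ¬ Neutral t := by
  induction h with
  | beta a b => intro hn; cases hn with | app _ hn' => cases hn'
  | appL b _ ih => intro hn; cases hn with | app _ hn' => exact ih hn'

lemma kstep_det {c c1 c2 : KCmd} (h1 : KStep c c1) (h2 : KStep c c2) : c1 = c2 := by
  cases h1 <;> cases h2 <;> rfl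

lemma step_plug {c c' : KCmd} (h : KStep c c') :
    plug c.1 c.2 = plug c'.1 c'.2 ∨ Wh (plug c.1 c.2) (plug c'.1 c'.2) := by
  cases h with
  | push a b E => exact Or.inl rfl
  | grab a b E => exact Or.inr (wh_plug (Wh.beta a b) E)

lemma sim {t t' : Tm} (h : Wh t t') (E : List Tm) :
    ∃ c, Relation.ReflTransGen KStep (t, E) c ∧ Relation.ReflTransGen KStep (t', E) c := by
  induction h generalizing E with
  | beta a b =>
    exact ⟨(subst b 0 a, E),
      .head (KStep.push _ _ _) (.single (KStep.grab a b E)), .refl⟩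
  | appL b h ih =>
    obtain ⟨c, h1, h2⟩ := ih (b :: E)
    exact ⟨c, .head (KStep.push _ _ _) h1, .head (KStep.push _ _ _) h2⟩

lemma det_triangle {α} {r : α → α → Prop} (det : ∀ {a b c}, r a b → r a c → b = c)
    {a b c : α} (h1 : Relation.ReflTransGen r a b) (h2 : Relation.ReflTransGen r a c) :
    Relation.ReflTransGen r b c ∨ Relation.ReflTransGen r c b := by
  induction h1 using Relation.ReflTransGen.head_induction_on generalizing c with
  | refl => exact Or.inl h2
  | head hab hbd ih =>
    rcases h2.cases_head with rfl | ⟨e, hae, hec⟩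
    · exact Or.inr (Relation.ReflTransGen.head hab hbd)
    · have := det hab hae; subst this; exact ih hec

lemma stuck_rtg {c d : KCmd} (hs : ∀ c', ¬ KStep c c')
    (h : Relation.ReflTransGen KStep c d) : c = d := by
  rcases h.cases_head with rfl | ⟨e, he, _⟩
  · rfl
  · exact absurd he (hs e)

lemma normal_run : ∀ (t : Tm) (E : List Tm), (∀ u, ¬ Wh (plug t E) u) →
    ∃ c : KCmd, Relation.ReflTransGen KStep (t, E) c ∧ (∀ c', ¬ KStep c c') ∧
      plug c.1 c.2 = plug t E
  | .var n, E, _ => by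
    refine ⟨(.var n, E), .refl, ?_, rfl⟩
    intro c' h; cases h
  | .app a b, E, hn => by
    obtain ⟨c, h1, h2, h3⟩ := normal_run a (b :: E) hn
    exact ⟨c, .head (KStep.push a b E) h1, h2, h3⟩
  | .lam a, [], _ => by
    refine ⟨(.lam a, []), .refl, ?_, rfl⟩
    intro c' h; cases h
  | .lam a, b :: E, hn => absurd (wh_plug (Wh.beta a b) E) (hn _)

lemma stuck_normal : ∀ (t : Tm) (E : List Tm), (∀ c', ¬ KStep (t, E) c') →
    ∀ u, ¬ Wh (plug t E) u
  | .var n, E, _ => fun _ hu => neutral_no_wh hu (neutral_plug (Neutral.var n) E)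
  | .app a b, E, hs => absurd (KStep.push a b E) (hs _)
  | .lam a, [], _ => fun u hu => by cases hu
  | .lam a, b :: E, hs => absurd (KStep.grab a b E) (hs _)

lemma rtg_plug {c c' : KCmd} (h : Relation.ReflTransGen KStep c c') :
    Relation.ReflTransGen Wh (plug c.1 c.2) (plug c'.1 c'.2) := by
  induction h with
  | refl => exact .refl
  | tail _ hstep ih =>
    rcases step_plug hstep with heq | hw
    · rw [← heq]; exact ih
    · exact ih.tail hw

lemma multi_sim {v v' : Tm} (h : Relation.ReflTransGen Wh v v') :
    ∃ c, Relation.ReflTransGen KStep (v, ([] : List Tm)) c ∧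
      Relation.ReflTransGen KStep (v', ([] : List Tm)) c := by
  induction h with
  | refl => exact ⟨(v, []), .refl, .refl⟩
  | tail _ hw ih =>
    obtain ⟨c, h1, h2⟩ := ih
    obtain ⟨c', h3, h4⟩ := sim hw []
    rcases det_triangle (r := KStep) (fun ha hb => kstep_det ha hb) h2 h3 with h | h
    · exact ⟨c', h1.trans h, h4⟩
    · exact ⟨c, h1, h4.trans h⟩

theorem krivine_wh_equiv (v v' : Tm) :
    (Relation.ReflTransGen Wh v v' ∧ ∀ v'', ¬ Wh v' v'') ↔
    (∃ c : KCmd, Relation.ReflTransGen KStep (v, ([] : List Tm)) c ∧ (∀ c', ¬ KStep c c') ∧ plug c.1 c.2 = v') := by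
  constructor
  · rintro ⟨hr, hn⟩
    obtain ⟨c, h1, h2⟩ := multi_sim hr
    obtain ⟨c0, g1, g2, g3⟩ := normal_run v' [] hn
    rcases det_triangle (r := KStep) (fun ha hb => kstep_det ha hb) h2 g1 with h | h
    · exact ⟨c0, h1.trans h, g2, g3⟩
    · have : c0 = c := stuck_rtg g2 h
      subst this
      exact ⟨c0, h1, g2, g3⟩
  · rintro ⟨⟨t, E⟩, h1, h2, h3⟩
    refine ⟨?_, ?_⟩
    · have := rtg_plug h1
      rwa [h3] at this
    · rw [← h3]
      exact stuck_normal t E h2
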